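/- For every EQ-formula E over L there exists an EQ-formula E' in solved form such that E ↔ E' is true in every model of the free equality axioms FEA(L). -/

import Mathlib

/-- A first-order language: function symbols with arities and predicate
symbols with arities.  Variables are natural numbers. -/
structure FOLang where
  Func : Type
  farity : Func → ℕ
  Pred : Type
  parity : Pred → ℕ

/-- The language has at least one constant. -/
def FOLang.HasConst (L : FOLang) : Prop := ∃ f : L.Func, L.farity f = 0

/-- Terms over a language. -/
inductive FOTerm (L : FOLang) : Type where
  | var : ℕ → FOTerm L
  | func : (f : L.Func) → (Fin (L.farity f) → FOTerm L) → FOTerm L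

namespace FOTerm

variable {L : FOLang}

/-- The (finite) set of variables occurring in a term. -/
def vars : FOTerm L → Finset ℕ
  | .var x => {x}
  | .func _ ts => Finset.univ.biUnion fun i => (ts i).vars

/-- Application of a (total) substitution to a term: simultaneously replace
every variable `x` by the term `f x`. -/
def applyT (f : ℕ → FOTerm L) : FOTerm L → FOTerm L
  | .var x => f x
  | .func g ts => .func g fun i => (ts i).applyT f

end FOTerm

/-- A pre-interpretation: a non-empty universe together with an
interpretation of the function symbols. -/
structure FOStruc (L : FOLang) where
  carrier : Type
  inhab : Nonempty carrier
  funcs : (f : L.Func) → (Fin (L.farity f) → carrier) → carrier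

/-- Evaluation of a term under a valuation. -/
def FOTerm.eval {L : FOLang} (M : FOStruc L) (h : ℕ → M.carrier) : FOTerm L → M.carrier
  | .var x => h x
  | .func f ts => M.funcs f fun i => (ts i).eval M h

/-- The set of `M`-instances of a term: values of the term under all
valuations. -/
def InstT {L : FOLang} (M : FOStruc L) (t : FOTerm L) : Set M.carrier :=
  { a | ∃ h : ℕ → M.carrier, t.eval M h = a }

/-- `M` is a model of the free equality axioms `FEA(L)`. -/
structure IsFEA {L : FOLang} (M : FOStruc L) : Prop where
  inj : ∀ f : L.Func, Function.Injective (M.funcs f)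
  disj : ∀ f g : L.Func, f ≠ g → ∀ a b, M.funcs f a ≠ M.funcs g b
  occ : ∀ (x : ℕ) (t : FOTerm L), t ≠ .var x → x ∈ t.vars →
      ∀ h : ℕ → M.carrier, h x ≠ t.eval M h

/-- The domain has at least two elements. -/
def FOStruc.Nontriv {L : FOLang} (M : FOStruc L) : Prop :=
  ∃ a b : M.carrier, a ≠ b

/-- The difference set `Diff(s,t)`: `InDiff s t (s',t')` means the pair
`(s',t')` belongs to `Diff(s,t)`. -/
inductive InDiff {L : FOLang} : FOTerm L → FOTerm L → FOTerm L × FOTerm L → Prop where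
  | var (x : ℕ) : InDiff (.var x) (.var x) (.var x, .var x)
  | varVar {x y : ℕ} : x ≠ y → InDiff (.var x) (.var y) (.var x, .var y)
  | varFunc (x : ℕ) (f : L.Func) (ts : Fin (L.farity f) → FOTerm L) :
      InDiff (.var x) (.func f ts) (.var x, .func f ts)
  | funcVar (f : L.Func) (ss : Fin (L.farity f) → FOTerm L) (y : ℕ) :
      InDiff (.func f ss) (.var y) (.func f ss, .var y)
  | funcFunc {f g : L.Func} (ss : Fin (L.farity f) → FOTerm L)
      (ts : Fin (L.farity g) → FOTerm L) : f ≠ g →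
      InDiff (.func f ss) (.func g ts) (.func f ss, .func g ts)
  | func {f : L.Func} (ss ts : Fin (L.farity f) → FOTerm L) (i : Fin (L.farity f))
      {p : FOTerm L × FOTerm L} :
      InDiff (ss i) (ts i) p → InDiff (.func f ss) (.func f ts) p
/-- An interpretation: a pre-interpretation together with an interpretation
of the predicate symbols. -/
structure FOInterp (L : FOLang) extends FOStruc L where
  preds : (p : L.Pred) → (Fin (L.parity p) → carrier) → Prop

/-- First-order formulas. -/
inductive FOForm (L : FOLang) : Type where
  | tru : FOForm L
  | fal : FOForm L
  | eq : FOTerm L → FOTerm L → FOForm L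
  | atom : (p : L.Pred) → (Fin (L.parity p) → FOTerm L) → FOForm L
  | not : FOForm L → FOForm L
  | and : FOForm L → FOForm L → FOForm L
  | or : FOForm L → FOForm L → FOForm L
  | imp : FOForm L → FOForm L → FOForm L
  | iff : FOForm L → FOForm L → FOForm L
  | ex : ℕ → FOForm L → FOForm L
  | all : ℕ → FOForm L → FOForm L

namespace FOForm

variable {L : FOLang}

/-- Tarskian satisfaction of a formula in an interpretation under a valuation. -/
def Sat (I : FOInterp L) (h : ℕ → I.carrier) : FOForm L → Prop
  | .tru => True
  | .fal => False
  | .eq s t => s.eval I.toFOStruc h = t.eval I.toFOStruc h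
  | .atom p ts => I.preds p fun i => (ts i).eval I.toFOStruc h
  | .not F => ¬ F.Sat I h
  | .and F G => F.Sat I h ∧ G.Sat I h
  | .or F G => F.Sat I h ∨ G.Sat I h
  | .imp F G => F.Sat I h → G.Sat I h
  | .iff F G => F.Sat I h ↔ G.Sat I h
  | .ex x F => ∃ d : I.carrier, F.Sat I (Function.update h x d)
  | .all x F => ∀ d : I.carrier, F.Sat I (Function.update h x d)

/-- Free variables of a formula. -/
def fv : FOForm L → Finset ℕ
  | .tru => ∅
  | .fal => ∅
  | .eq s t => s.vars ∪ t.vars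
  | .atom _ ts => Finset.univ.biUnion fun i => (ts i).vars
  | .not F => F.fv
  | .and F G => F.fv ∪ G.fv
  | .or F G => F.fv ∪ G.fv
  | .imp F G => F.fv ∪ G.fv
  | .iff F G => F.fv ∪ G.fv
  | .ex x F => F.fv.erase x
  | .all x F => F.fv.erase x

end FOForm

/-- The interpretation obtained from a pre-interpretation by interpreting
every predicate symbol as the empty relation (for formulas without atoms
the choice is irrelevant). -/
def FOStruc.toInterp {L : FOLang} (M : FOStruc L) : FOInterp L :=
  { toFOStruc := M, preds := fun _ _ => False }

/-- Satisfaction of an (equational) formula in a pre-interpretation. -/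
def ESat {L : FOLang} (M : FOStruc L) (h : ℕ → M.carrier) (F : FOForm L) : Prop :=
  F.Sat M.toInterp h

/-- The set of solutions of a formula in a pre-interpretation. -/
def SolE {L : FOLang} (M : FOStruc L) (F : FOForm L) : Set (ℕ → M.carrier) :=
  { h | ESat M h F }

/-- EQ-formulas: built from `True`, `False` and equations using `∧` and `∃`. -/
inductive IsEQ {L : FOLang} : FOForm L → Prop where
  | tru : IsEQ .tru
  | fal : IsEQ .fal
  | eq (s t : FOTerm L) : IsEQ (.eq s t)
  | and {F G : FOForm L} : IsEQ F → IsEQ G → IsEQ (.and F G)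
  | ex (x : ℕ) {F : FOForm L} : IsEQ F → IsEQ (.ex x F)

/-- Equational formulas: first-order formulas with no atoms other than
equations. -/
inductive IsEquational {L : FOLang} : FOForm L → Prop where
  | tru : IsEquational .tru
  | fal : IsEquational .fal
  | eq (s t : FOTerm L) : IsEquational (.eq s t)
  | not {F : FOForm L} : IsEquational F → IsEquational (.not F)
  | and {F G : FOForm L} : IsEquational F → IsEquational G → IsEquational (.and F G)
  | or {F G : FOForm L} : IsEquational F → IsEquational G → IsEquational (.or F G)
  | imp {F G : FOForm L} : IsEquational F → IsEquational G → IsEquational (.imp F G)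
  | iff {F G : FOForm L} : IsEquational F → IsEquational G → IsEquational (.iff F G)
  | ex (x : ℕ) {F : FOForm L} : IsEquational F → IsEquational (.ex x F)
  | all (x : ℕ) {F : FOForm L} : IsEquational F → IsEquational (.all x F)

/-- `F ≼ F'` : `F → F'` is true in every model of `FEA(L)`. -/
def EQle {L : FOLang} (F F' : FOForm L) : Prop :=
  ∀ M : FOStruc L, IsFEA M → ∀ h : ℕ → M.carrier, ESat M h F → ESat M h F'

/-- `F ≈ F'` : `F ↔ F'` is true in every model of `FEA(L)`. -/
def EQequiv {L : FOLang} (F F' : FOForm L) : Prop := EQle F F' ∧ EQle F' F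

/-- `F ≺ F'`. -/
def EQlt {L : FOLang} (F F' : FOForm L) : Prop := EQle F F' ∧ ¬ EQequiv F F'

/-- The conjunction `x₁ = s₁ ∧ … ∧ xₙ = sₙ`. -/
def conjOf {L : FOLang} : List (ℕ × FOTerm L) → FOForm L
  | [] => .tru
  | [p] => .eq (.var p.1) p.2
  | p :: rest => .and (.eq (.var p.1) p.2) (conjOf rest)

/-- The formula `(∃ z₁) … (∃ z_k) F`. -/
def exOf {L : FOLang} (zs : List ℕ) (F : FOForm L) : FOForm L :=
  zs.foldr .ex F

/-- The disjunction `F₁ ∨ … ∨ Fₙ`. -/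
def disjOf {L : FOLang} : List (FOForm L) → FOForm L
  | [] => .fal
  | [F] => F
  | F :: rest => .or F (disjOf rest)

/-- A formula is in solved form if it is `True`, `False`, or of the shape
`∃ z₁ … ∃ z_k (x₁ = s₁ ∧ … ∧ xₙ = sₙ)` where the `xᵢ` and `z_j` are
pairwise distinct, no `xᵢ` occurs in any right-hand side, every `z_j`
occurs in the conjunction, and no `sᵢ` is one of the `z_j`. -/
def SolvedForm {L : FOLang} (F : FOForm L) : Prop :=
  F = .tru ∨ F = .fal ∨
    ∃ (zs : List ℕ) (eqs : List (ℕ × FOTerm L)),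
      eqs ≠ [] ∧
      F = exOf zs (conjOf eqs) ∧
      (eqs.map Prod.fst ++ zs).Nodup ∧
      (∀ p ∈ eqs, ∀ q ∈ eqs, p.1 ∉ q.2.vars) ∧
      (∀ z ∈ zs, ∃ p ∈ eqs, z ∈ p.2.vars) ∧
      (∀ z ∈ zs, ∀ p ∈ eqs, p.2 ≠ .var z)

/-- The projection of an EQ-formula onto a finite set of variables:
existentially quantify the free variables not in `X`; the projection of
`False` is `False`. -/
def projE {L : FOLang} (E : FOForm L) (X : Finset ℕ) : FOForm L :=
  match E with
  | .fal => .fal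
  | E => exOf ((E.fv \ X).sort (· ≤ ·)) E

/-- The universal closure of a formula. -/
def univClosure {L : FOLang} (F : FOForm L) : FOForm L :=
  (F.fv.sort (· ≤ ·)).foldr .all F

/-- A formula is valid if it is true in every interpretation (under every
valuation). -/
def FOValid {L : FOLang} (F : FOForm L) : Prop :=
  ∀ (I : FOInterp L) (h : ℕ → I.carrier), F.Sat I h

/-- An EQ-formula is consistent if it has a solution in some model of the
free equality axioms. -/
def EQConsistent {L : FOLang} (E : FOForm L) : Prop :=
  ∃ M : FOStruc L, IsFEA M ∧ ∃ h : ℕ → M.carrier, ESat M h E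
/-- Ground terms: terms with no variables. -/
def GroundTerm (L : FOLang) : Type := { t : FOTerm L // t.vars = ∅ }

/-- The Herbrand pre-interpretation: its domain is the set of ground terms
and function symbols are interpreted formally. -/
def Herbrand (L : FOLang) (hc : L.HasConst) : FOStruc L where
  carrier := GroundTerm L
  inhab := by
    obtain ⟨f, hf⟩ := hc
    refine ⟨⟨.func f (fun i => Fin.elim0 (Fin.cast hf i)), ?_⟩⟩
    ext x
    simp only [FOTerm.vars, Finset.mem_biUnion, Finset.mem_univ, true_and,
      Finset.notMem_empty, iff_false, not_exists]
    intro i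
    exact Fin.elim0 (Fin.cast hf i)
  funcs := fun f ts => ⟨.func f (fun i => (ts i).1), by
    ext x
    simp only [FOTerm.vars, Finset.mem_biUnion, Finset.mem_univ, true_and,
      Finset.notMem_empty, iff_false, not_exists]
    intro i hx
    rw [(ts i).2] at hx
    exact Finset.notMem_empty x hx⟩

/-- The language obtained by adding a countably infinite set of new
constants. -/
def addConsts (L : FOLang) : FOLang where
  Func := L.Func ⊕ ℕ
  farity := Sum.elim L.farity fun _ => 0
  Pred := L.Pred
  parity := L.parity

/-- The canonical embedding of terms into the extended language. -/
def FOTerm.lift {L : FOLang} : FOTerm L → FOTerm (addConsts L)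
  | .var x => .var x
  | .func f ts => .func (Sum.inl f) fun i => (ts i).lift

/-- The canonical embedding of formulas into the extended language. -/
def FOForm.lift {L : FOLang} : FOForm L → FOForm (addConsts L)
  | .tru => .tru
  | .fal => .fal
  | .eq s t => .eq s.lift t.lift
  | .atom p ts => .atom p fun i => (ts i).lift
  | .not F => .not F.lift
  | .and F G => .and F.lift G.lift
  | .or F G => .or F.lift G.lift
  | .imp F G => .imp F.lift G.lift
  | .iff F G => .iff F.lift G.lift
  | .ex x F => .ex x F.lift
  | .all x F => .all x F.lift
/-- A finite substitution: a finite set of variables (its domain) together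
with an assignment of terms to variables which is the identity outside the
domain. -/
structure FinSubst (L : FOLang) where
  dom : Finset ℕ
  map : ℕ → FOTerm L
  outside : ∀ x ∉ dom, map x = .var x

namespace FinSubst

variable {L : FOLang}

/-- `Range(σ)`: the set of variables occurring in the terms `σ x`, `x ∈ Dom(σ)`. -/
def range (σ : FinSubst L) : Finset ℕ :=
  σ.dom.biUnion fun x => (σ.map x).vars

/-- `θ` is an extension of `σ`. -/
def Extends (θ σ : FinSubst L) : Prop :=
  σ.dom ⊆ θ.dom ∧ ∀ x ∈ σ.dom, θ.map x = σ.map x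

/-- `θ` is a regular extension of `σ`: it extends `σ` and maps
`Dom(θ) \ Dom(σ)` injectively into the variables not in `Range(σ)`. -/
def RegExt (θ σ : FinSubst L) : Prop :=
  Extends θ σ ∧
  (∀ x ∈ θ.dom, x ∉ σ.dom → ∃ y : ℕ, y ∉ σ.range ∧ θ.map x = .var y) ∧
  Set.InjOn θ.map ↑(θ.dom \ σ.dom)

/-- The set of `M`-instances of a substitution. -/
def Inst {L : FOLang} (M : FOStruc L) (σ : FinSubst L) : Set (ℕ → M.carrier) :=
  { h | ∃ g : ℕ → M.carrier, ∀ x ∈ σ.dom, h x = (σ.map x).eval M g }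

open Classical in
/-- The restriction of `σ` to `Dom(σ) ∩ X`. -/
noncomputable def restrict (σ : FinSubst L) (X : Set ℕ) : FinSubst L where
  dom := σ.dom.filter fun x => x ∈ X
  map := fun x => if x ∈ σ.dom ∧ x ∈ X then σ.map x else .var x
  outside := fun x hx => if_neg fun h => hx (Finset.mem_filter.2 ⟨h.1, h.2⟩)

/-- The composition `σθ`, defined on `Dom(σ)` by `x ↦ (σ x)θ`. -/
def comp (σ θ : FinSubst L) : FinSubst L where
  dom := σ.dom
  map := fun x => if x ∈ σ.dom then (σ.map x).applyT θ.map else .var x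
  outside := fun _ hx => if_neg hx

/-- `σ ≼ θ` : `θ` is more general than `σ`. -/
def Le (σ θ : FinSubst L) : Prop :=
  ∃ σ' θ' τ : FinSubst L,
    RegExt σ' σ ∧ RegExt θ' θ ∧ σ'.dom = θ'.dom ∧
    θ'.range ⊆ τ.dom ∧ σ' = θ'.comp τ

/-- `σ ≈ θ`. -/
def Equiv (σ θ : FinSubst L) : Prop := Le σ θ ∧ Le θ σ

/-- A permutation: a substitution mapping its domain injectively to
variables. -/
def IsPerm (τ : FinSubst L) : Prop :=
  (∀ x ∈ τ.dom, ∃ y : ℕ, τ.map x = .var y) ∧ Set.InjOn τ.map ↑τ.dom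

/-- The empty substitution. -/
def empty (L : FOLang) : FinSubst L where
  dom := ∅
  map := fun x => .var x
  outside := fun _ _ => rfl

/-- The kernel of a substitution: the intersection of all sets `X` of
variables such that `σ↾X ≈ σ`. -/
def kernel (σ : FinSubst L) : Set ℕ :=
  ⋂₀ { X : Set ℕ | Equiv (σ.restrict X) σ }

end FinSubst

noncomputable section

theorem exists_notin_finset (s : Finset ℕ) : ∃ n : ℕ, n ∉ s :=
  ⟨s.sup id + 1, fun h => by
    have := Finset.le_sup (f := id) h
    simp only [id] at this
    omega⟩

/-- The first variable not belonging to a given finite set of variables. -/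
def freshVar (s : Finset ℕ) : ℕ := Nat.find (exists_notin_finset s)

/-- Insert a binding into a substitution. -/
def FinSubst.insertB {L : FOLang} (σ : FinSubst L) (x : ℕ) (t : FOTerm L) :
    FinSubst L where
  dom := insert x σ.dom
  map := Function.update σ.map x t
  outside := by
    intro z hz
    have hzx : z ≠ x := fun h => hz (h ▸ Finset.mem_insert_self x σ.dom)
    have hzd : z ∉ σ.dom := fun h => hz (Finset.mem_insert_of_mem h)
    rw [Function.update_of_ne hzx]
    exact σ.outside z hzd

/-- One step of the regular-extension procedure: extend the substitution
with a binding for `x` (to itself if possible, otherwise to the first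
variable not occurring in the range). -/
def regStep {L : FOLang} (acc : FinSubst L) (x : ℕ) : FinSubst L :=
  if x ∈ acc.dom then acc
  else acc.insertB x (.var (if x ∈ acc.range then freshVar acc.range else x))

/-- Restrict `σ` to the free variables of `F` and extend the result
regularly to a substitution whose domain is exactly `fv F`. -/
def FinSubst.extendFV {L : FOLang} (σ : FinSubst L) (F : FOForm L) : FinSubst L :=
  (F.fv.sort (· ≤ ·)).foldl regStep (σ.restrict ↑F.fv)

/-- Capture-avoiding simultaneous substitution on formulas (bound variables
are renamed as needed). -/
def FOForm.applyF {L : FOLang} (f : ℕ → FOTerm L) : FOForm L → FOForm L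
  | .tru => .tru
  | .fal => .fal
  | .eq s t => .eq (s.applyT f) (t.applyT f)
  | .atom p ts => .atom p fun i => (ts i).applyT f
  | .not F => .not (F.applyF f)
  | .and F G => .and (F.applyF f) (G.applyF f)
  | .or F G => .or (F.applyF f) (G.applyF f)
  | .imp F G => .imp (F.applyF f) (G.applyF f)
  | .iff F G => .iff (F.applyF f) (G.applyF f)
  | .ex x G =>
      let R : Finset ℕ := (G.fv.erase x).biUnion fun z => (f z).vars
      let y : ℕ := if x ∈ R then freshVar R else x
      .ex y (G.applyF (Function.update f x (.var y)))
  | .all x G =>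
      let R : Finset ℕ := (G.fv.erase x).biUnion fun z => (f z).vars
      let y : ℕ := if x ∈ R then freshVar R else x
      .all y (G.applyF (Function.update f x (.var y)))

/-- The application `Fσ` of a finite substitution to a formula: restrict
`σ` to the free variables of `F`, extend regularly to all of `fv F`, and
substitute capture-avoidingly. -/
def FOForm.applyS {L : FOLang} (σ : FinSubst L) (F : FOForm L) : FOForm L :=
  F.applyF (σ.extendFV F).map

end
/-- The set of finite substitutions together with an added bottom element
`⊥` (represented by `none`): the extended preorder. -/
def LeBot {L : FOLang} : Option (FinSubst L) → Option (FinSubst L) → Prop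
  | none, _ => True
  | some _, none => False
  | some σ, some θ => FinSubst.Le σ θ

/-- The induced equivalence on `Subst⊥`. -/
def EquivBot {L : FOLang} (a b : Option (FinSubst L)) : Prop :=
  LeBot a b ∧ LeBot b a

/-- The quotient of `Subst⊥` by `≈`. -/
def SubstQuot (L : FOLang) : Type := Quot (EquivBot (L := L))

/-- The induced partial order on the quotient `Subst⊥/≈`. -/
def SubstQuotLe {L : FOLang} (a b : SubstQuot L) : Prop :=
  ∃ s t : Option (FinSubst L), Quot.mk _ s = a ∧ Quot.mk _ t = b ∧ LeBot s t

/-- EQ-formulas as a subtype. -/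
def EQSub (L : FOLang) : Type := { F : FOForm L // IsEQ F }

/-- The quotient of the set of EQ-formulas by `≈`. -/
def EQQuot (L : FOLang) : Type :=
  Quot (fun a b : EQSub L => EQequiv a.1 b.1)

/-- The induced partial order on the quotient of EQ-formulas. -/
def EQQuotLe {L : FOLang} (a b : EQQuot L) : Prop :=
  ∃ E E' : EQSub L, Quot.mk _ E = a ∧ Quot.mk _ E' = b ∧ EQle E.1 E'.1

/-- The substitution `{x₁↦s₁, …, xₙ↦sₙ, y₁↦y₁, …, y_k↦y_k}` associated
with a solved form with equations `eqs` and parameters `params`. -/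
theorem lookup_eq_none_of_not_mem {L : FOLang} (x : ℕ) :
    ∀ eqs : List (ℕ × FOTerm L), x ∉ eqs.map Prod.fst → eqs.lookup x = none := by
  intro eqs
  induction eqs with
  | nil => intro _; rfl
  | cons p rest ih =>
    intro hx1
    have hp : p.1 ≠ x := by
      intro h
      exact hx1 (by simp [h])
    have hr : x ∉ rest.map Prod.fst := fun h => hx1 (by simp [h])
    have hxp : (x == p.1) = false := beq_eq_false_iff_ne.mpr fun h => hp h.symm
    simp only [List.lookup, hxp]
    exact ih hr

def solvedSubst {L : FOLang} (eqs : List (ℕ × FOTerm L)) (params : Finset ℕ) :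
    FinSubst L where
  dom := (eqs.map Prod.fst).toFinset ∪ params
  map := fun x => (eqs.lookup x).getD (.var x)
  outside := by
    intro x hx
    have hx1 : x ∉ eqs.map Prod.fst := fun h =>
      hx (Finset.mem_union_left _ (List.mem_toFinset.2 h))
    simp [lookup_eq_none_of_not_mem x eqs hx1]
section Aux
variable {L : FOLang}

theorem mem_vars_func {x : ℕ} {f : L.Func} {ts : Fin (L.farity f) → FOTerm L} :
    x ∈ (FOTerm.func f ts).vars ↔ ∃ i, x ∈ (ts i).vars := by
  simp [FOTerm.vars]

theorem eval_congr (M : FOStruc L) {g g' : ℕ → M.carrier} :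
    ∀ t : FOTerm L, (∀ x ∈ t.vars, g x = g' x) → t.eval M g = t.eval M g' := by
  intro t
  induction t with
  | var x => intro h; exact h x (by simp [FOTerm.vars])
  | func f ts ih =>
    intro h
    simp only [FOTerm.eval]
    congr 1; funext i
    exact ih i fun x hx => h x (mem_vars_func.2 ⟨i, hx⟩)

theorem eval_applyT (M : FOStruc L) (f : ℕ → FOTerm L) (g : ℕ → M.carrier) :
    ∀ t : FOTerm L, (t.applyT f).eval M g = t.eval M (fun y => (f y).eval M g) := by
  intro t
  induction t with
  | var x => rfl
  | func fn ts ih =>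
    simp only [FOTerm.applyT, FOTerm.eval]
    congr 1; funext i; exact ih i

theorem mem_vars_applyT (f : ℕ → FOTerm L) (x : ℕ) :
    ∀ t : FOTerm L, (x ∈ (t.applyT f).vars ↔ ∃ y ∈ t.vars, x ∈ (f y).vars) := by
  intro t
  induction t with
  | var z => simp [FOTerm.applyT, FOTerm.vars]
  | func fn ts ih =>
    simp only [FOTerm.applyT, mem_vars_func]
    constructor
    · rintro ⟨i, hi⟩
      obtain ⟨y, hy, hx⟩ := (ih i).1 hi
      exact ⟨y, ⟨i, hy⟩, hx⟩
    · rintro ⟨y, ⟨i, hi⟩, hx⟩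
      exact ⟨i, (ih i).2 ⟨y, hi, hx⟩⟩

/-- term size -/
def termSize : FOTerm L → ℕ
  | .var _ => 1
  | .func _ ts => 1 + Finset.univ.sum fun i => termSize (ts i)

theorem termSize_pos : ∀ t : FOTerm L, 0 < termSize t
  | .var _ => Nat.one_pos
  | .func _ _ => Nat.lt_of_lt_of_le Nat.one_pos (Nat.le_add_right 1 _)

def eqsSize : List (FOTerm L × FOTerm L) → ℕ
  | [] => 0
  | p :: rest => termSize p.1 + termSize p.2 + eqsSize rest

def varsOf : List (FOTerm L × FOTerm L) → Finset ℕ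
  | [] => ∅
  | p :: rest => p.1.vars ∪ p.2.vars ∪ varsOf rest

theorem mem_varsOf {x : ℕ} : ∀ {eqs : List (FOTerm L × FOTerm L)},
    x ∈ varsOf eqs ↔ ∃ p ∈ eqs, x ∈ p.1.vars ∨ x ∈ p.2.vars := by
  intro eqs
  induction eqs with
  | nil => simp [varsOf]
  | cons p rest ih => simp [varsOf, ih, Finset.mem_union, or_assoc]

def SatEqs (M : FOStruc L) (g : ℕ → M.carrier) (eqs : List (FOTerm L × FOTerm L)) : Prop :=
  ∀ p ∈ eqs, p.1.eval M g = p.2.eval M g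

def SatU (M : FOStruc L) (g : ℕ → M.carrier) (U : List (ℕ × FOTerm L)) : Prop :=
  ∀ p ∈ U, g p.1 = p.2.eval M g

def SysSat (M : FOStruc L) (h : ℕ → M.carrier) (zs : List ℕ)
    (eqs : List (FOTerm L × FOTerm L)) : Prop :=
  ∃ g, (∀ y ∉ zs, g y = h y) ∧ SatEqs M g eqs

def USat (M : FOStruc L) (h : ℕ → M.carrier) (zs : List ℕ)
    (U : List (ℕ × FOTerm L)) : Prop :=
  ∃ g, (∀ y ∉ zs, g y = h y) ∧ SatU M g U

theorem freshVar_not_mem (s : Finset ℕ) : freshVar s ∉ s := Nat.find_spec (exists_notin_finset s)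

end Aux
section Aux2
variable {L : FOLang}

theorem exOf_sat (M : FOStruc L) (F : FOForm L) :
    ∀ (zs : List ℕ) (h : ℕ → M.carrier),
      ESat M h (exOf zs F) ↔ ∃ g, (∀ y ∉ zs, g y = h y) ∧ ESat M g F := by
  intro zs
  induction zs with
  | nil =>
    intro h
    constructor
    · intro hs; exact ⟨h, fun y _ => rfl, hs⟩
    · rintro ⟨g, hg, hs⟩
      have : g = h := funext fun y => hg y (by simp)
      rwa [this] at hs
  | cons z zs ih =>
    intro h
    show (∃ d, ESat M (Function.update h z d) (exOf zs F)) ↔ _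
    constructor
    · rintro ⟨d, hd⟩
      obtain ⟨g, hg, hs⟩ := (ih (Function.update h z d)).1 hd
      refine ⟨g, fun y hy => ?_, hs⟩
      have hyz : y ≠ z := fun e => hy (e ▸ (List.mem_cons_self (a := z) (l := zs)))
      rw [hg y (fun e => hy (List.mem_cons_of_mem z e)), Function.update_of_ne hyz]
    · rintro ⟨g, hg, hs⟩
      refine ⟨g z, (ih (Function.update h z (g z))).2 ⟨g, fun y hy => ?_, hs⟩⟩
      by_cases hyz : y = z
      · subst hyz; simp
      · rw [Function.update_of_ne hyz]
        exact hg y (by simp [hyz, hy])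

theorem conjOf_sat (M : FOStruc L) :
    ∀ (eqs : List (ℕ × FOTerm L)) (g : ℕ → M.carrier),
      ESat M g (conjOf eqs) ↔ SatU M g eqs := by
  intro eqs
  induction eqs with
  | nil => intro g; simp [conjOf, ESat, FOForm.Sat, SatU]
  | cons p rest ih =>
    intro g
    cases rest with
    | nil => simp [conjOf, ESat, FOForm.Sat, SatU, FOStruc.toInterp, FOTerm.eval]
    | cons q rest' =>
      show ESat M g (.and (.eq (.var p.1) p.2) (conjOf (q :: rest'))) ↔ _
      have : ESat M g (.and (.eq (.var p.1) p.2) (conjOf (q :: rest'))) ↔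
          (g p.1 = p.2.eval M g) ∧ ESat M g (conjOf (q :: rest')) := Iff.rfl
      rw [this, ih g]
      show (g p.1 = p.2.eval M g) ∧ SatU M g (q :: rest') ↔ SatU M g (p :: q :: rest')
      simp only [SatU, List.mem_cons]
      constructor
      · rintro ⟨h1, h2⟩ r hr
        rcases hr with rfl | hr
        · exact h1
        · exact h2 r (by simp [hr])
      · intro hh
        exact ⟨hh p (Or.inl rfl), fun r hr => hh r (Or.inr hr)⟩

end Aux2
section Aux3
variable {L : FOLang}

/-- renaming substitution -/
def renS (x x' : ℕ) : ℕ → FOTerm L := fun y => if y = x then .var x' else .var y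

theorem renameZ (M : FOStruc L) (h : ℕ → M.carrier) (x x' : ℕ) (zs : List ℕ)
    (eqs : List (FOTerm L × FOTerm L))
    (hx' : x' ∉ varsOf eqs) (hx'zs : x' ∉ zs) (hxx' : x' ≠ x) :
    SysSat M h (x :: zs) eqs ↔
      SysSat M h (x' :: zs) (eqs.map fun p => (p.1.applyT (renS x x'), p.2.applyT (renS x x'))) := by
  have key : ∀ (g g' : ℕ → M.carrier), g' x' = g x → (∀ y, y ≠ x → y ≠ x' → g' y = g y) →
      ∀ t : FOTerm L, t.vars ⊆ varsOf eqs → (t.applyT (renS x x')).eval M g' = t.eval M g := by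
    intro g g' hgx hg t ht
    rw [eval_applyT]
    apply eval_congr
    intro y hy
    by_cases hyx : y = x
    · subst hyx; simp [renS, FOTerm.eval, hgx]
    · have hyx' : y ≠ x' := fun e => hx' (e ▸ ht hy)
      simp [renS, hyx, FOTerm.eval, hg y hyx hyx']
  constructor
  · rintro ⟨g, hg, hs⟩
    refine ⟨Function.update (Function.update g x (h x)) x' (g x), fun y hy => ?_, ?_⟩
    · by_cases hyx' : y = x'
      · exact absurd (hyx' ▸ (List.mem_cons_self (a := x') (l := zs))) hy
      · rw [Function.update_of_ne hyx']
        by_cases hyx : y = x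
        · subst hyx; simp
        · rw [Function.update_of_ne hyx]
          exact hg y (by simp at hy ⊢; tauto)
    · intro p hp
      simp only [List.mem_map] at hp
      obtain ⟨q, hq, rfl⟩ := hp
      have hsub1 : q.1.vars ⊆ varsOf eqs := fun y hy => mem_varsOf.2 ⟨q, hq, Or.inl hy⟩
      have hsub2 : q.2.vars ⊆ varsOf eqs := fun y hy => mem_varsOf.2 ⟨q, hq, Or.inr hy⟩
      have hgx : (Function.update (Function.update g x (h x)) x' (g x)) x' = g x := by simp
      have hgy : ∀ y, y ≠ x → y ≠ x' →
          (Function.update (Function.update g x (h x)) x' (g x)) y = g y := by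
        intro y h1 h2
        rw [Function.update_of_ne h2, Function.update_of_ne h1]
      rw [key _ _ hgx hgy q.1 hsub1, key _ _ hgx hgy q.2 hsub2]
      exact hs q hq
  · rintro ⟨g', hg', hs⟩
    refine ⟨Function.update (Function.update g' x' (h x')) x (g' x'), fun y hy => ?_, ?_⟩
    · by_cases hyx : y = x
      · exact absurd (hyx ▸ (List.mem_cons_self (a := x) (l := zs))) hy
      · rw [Function.update_of_ne hyx]
        by_cases hyx' : y = x'
        · subst hyx'; simp
        · rw [Function.update_of_ne hyx']
          exact hg' y (by simp at hy ⊢; tauto)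
    · intro q hq
      have hsub1 : q.1.vars ⊆ varsOf eqs := fun y hy => mem_varsOf.2 ⟨q, hq, Or.inl hy⟩
      have hsub2 : q.2.vars ⊆ varsOf eqs := fun y hy => mem_varsOf.2 ⟨q, hq, Or.inr hy⟩
      set g := Function.update (Function.update g' x' (h x')) x (g' x') with hgdef
      have hgx : g' x' = g x := by simp [hgdef]
      have hgy : ∀ y, y ≠ x → y ≠ x' → g' y = g y := by
        intro y h1 h2
        simp [hgdef, Function.update_of_ne h1, Function.update_of_ne h2]
      rw [← key g g' hgx hgy q.1 hsub1, ← key g g' hgx hgy q.2 hsub2]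
      exact hs _ (List.mem_map.2 ⟨q, hq, rfl⟩)

theorem SatEqs_append (M : FOStruc L) (g : ℕ → M.carrier) (l1 l2 : List (FOTerm L × FOTerm L)) :
    SatEqs M g (l1 ++ l2) ↔ SatEqs M g l1 ∧ SatEqs M g l2 := by
  simp only [SatEqs, List.mem_append]
  constructor
  · intro h; exact ⟨fun p hp => h p (Or.inl hp), fun p hp => h p (Or.inr hp)⟩
  · rintro ⟨h1, h2⟩ p hp; rcases hp with hp | hp
    · exact h1 p hp
    · exact h2 p hp

theorem mem_varsOf_append {x : ℕ} {l1 l2 : List (FOTerm L × FOTerm L)} :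
    x ∈ varsOf (l1 ++ l2) ↔ x ∈ varsOf l1 ∨ x ∈ varsOf l2 := by
  simp only [mem_varsOf, List.mem_append]
  constructor
  · rintro ⟨p, hp | hp, h⟩
    · exact Or.inl ⟨p, hp, h⟩
    · exact Or.inr ⟨p, hp, h⟩
  · rintro (⟨p, hp, h⟩ | ⟨p, hp, h⟩)
    · exact ⟨p, Or.inl hp, h⟩
    · exact ⟨p, Or.inr hp, h⟩

/-- Flattening of an EQ formula into a prenex system of equations. -/
theorem flatten (E : FOForm L) (hE : IsEQ E) :
    ∀ A : Finset ℕ, ↑E.fv ⊆ (A : Set ℕ) →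
    (∀ (M : FOStruc L) (h : ℕ → M.carrier), ¬ ESat M h E) ∨
    ∃ zs eqs, zs.Nodup ∧ (∀ z ∈ zs, z ∉ A) ∧
      (∀ x ∈ varsOf eqs, x ∈ E.fv ∨ x ∈ zs) ∧
      ∀ (M : FOStruc L) (h : ℕ → M.carrier), ESat M h E ↔ SysSat M h zs eqs := by
  induction hE with
  | tru =>
    intro A _
    right
    refine ⟨[], [], List.nodup_nil, by simp, by simp [varsOf], fun M h => ?_⟩
    constructor
    · intro _; exact ⟨h, fun y _ => rfl, fun p hp => absurd hp (List.not_mem_nil)⟩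
    · intro _; trivial
  | fal =>
    intro A _
    left
    intro M h hs
    exact hs
  | eq s t =>
    intro A _
    right
    refine ⟨[], [(s, t)], List.nodup_nil, by simp, ?_, fun M h => ?_⟩
    · intro x hx
      left
      simp only [mem_varsOf, List.mem_singleton] at hx
      obtain ⟨p, rfl, hp⟩ := hx
      show x ∈ FOForm.fv (.eq s t)
      simp only [FOForm.fv, Finset.mem_union]
      exact hp
    · constructor
      · intro hs
        refine ⟨h, fun y _ => rfl, fun p hp => ?_⟩
        simp only [List.mem_singleton] at hp
        subst hp
        exact hs
      · rintro ⟨g, hg, hs⟩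
        have hgh : g = h := funext fun y => hg y (by simp)
        have := hs (s, t) (by simp)
        rw [hgh] at this
        exact this
  | @and F G hF hG ihF ihG =>
    intro A hA
    have hAF : ↑F.fv ⊆ (A : Set ℕ) := fun x hx => hA (by
      show x ∈ FOForm.fv (.and F G); simp only [FOForm.fv, Finset.mem_union]; exact Or.inl hx)
    have hAG : ↑G.fv ⊆ (A : Set ℕ) := fun x hx => hA (by
      show x ∈ FOForm.fv (.and F G); simp only [FOForm.fv, Finset.mem_union]; exact Or.inr hx)
    rcases ihF A hAF with hFbad | ⟨zs1, eqs1, hnd1, hav1, hv1, hsem1⟩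
    · left; intro M h hs; exact hFbad M h hs.1
    rcases ihG (A ∪ zs1.toFinset) (fun x hx => by
        simp only [Finset.coe_union, Set.mem_union]; exact Or.inl (hAG hx)) with
      hGbad | ⟨zs2, eqs2, hnd2, hav2, hv2, hsem2⟩
    · left; intro M h hs; exact hGbad M h hs.2
    right
    have hz1A : ∀ z ∈ zs1, z ∉ A := hav1
    have hz2A : ∀ z ∈ zs2, z ∉ A := fun z hz hzA => hav2 z hz (Finset.mem_union_left _ hzA)
    have hz2z1 : ∀ z ∈ zs2, z ∉ zs1 := fun z hz hz1 =>
      hav2 z hz (Finset.mem_union_right _ (List.mem_toFinset.2 hz1))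
    refine ⟨zs1 ++ zs2, eqs1 ++ eqs2, ?_, ?_, ?_, ?_⟩
    · exact List.Nodup.append hnd1 hnd2 (fun z hz1 hz2 => hz2z1 z hz2 hz1)
    · intro z hz
      rcases List.mem_append.1 hz with hz | hz
      · exact hz1A z hz
      · exact hz2A z hz
    · intro x hx
      rcases mem_varsOf_append.1 hx with hx | hx
      · rcases hv1 x hx with hx | hx
        · left; show x ∈ FOForm.fv (.and F G)
          simp only [FOForm.fv, Finset.mem_union]; exact Or.inl hx
        · right; exact List.mem_append.2 (Or.inl hx)
      · rcases hv2 x hx with hx | hx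
        · left; show x ∈ FOForm.fv (.and F G)
          simp only [FOForm.fv, Finset.mem_union]; exact Or.inr hx
        · right; exact List.mem_append.2 (Or.inr hx)
    · intro M h
      have hESat : ESat M h (.and F G) ↔ ESat M h F ∧ ESat M h G := Iff.rfl
      rw [hESat, hsem1 M h, hsem2 M h]
      constructor
      · rintro ⟨⟨g1, hg1, hs1⟩, ⟨g2, hg2, hs2⟩⟩
        classical
        refine ⟨fun y => if y ∈ zs1 then g1 y else g2 y, fun y hy => ?_, ?_⟩
        · simp only [List.mem_append] at hy
          push_neg at hy
          show (if y ∈ zs1 then g1 y else g2 y) = h y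
          rw [if_neg hy.1]
          exact hg2 y hy.2
        · rw [SatEqs_append]
          have hev1 : ∀ t : FOTerm L, (∀ y ∈ t.vars, y ∈ F.fv ∨ y ∈ zs1) →
              t.eval M (fun y => if y ∈ zs1 then g1 y else g2 y) = t.eval M g1 := by
            intro t ht
            apply eval_congr
            intro y hy
            show (if y ∈ zs1 then g1 y else g2 y) = g1 y
            by_cases hyz : y ∈ zs1
            · rw [if_pos hyz]
            · rw [if_neg hyz]
              have hyF : y ∈ F.fv := (ht y hy).resolve_right hyz
              have hy2 : y ∉ zs2 := fun hh => hz2A y hh (hAF hyF)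
              rw [hg2 y hy2, hg1 y hyz]
          have hev2 : ∀ t : FOTerm L, (∀ y ∈ t.vars, y ∈ G.fv ∨ y ∈ zs2) →
              t.eval M (fun y => if y ∈ zs1 then g1 y else g2 y) = t.eval M g2 := by
            intro t ht
            apply eval_congr
            intro y hy
            show (if y ∈ zs1 then g1 y else g2 y) = g2 y
            by_cases hyz : y ∈ zs1
            · exfalso
              have hnz2 : y ∉ zs2 := fun hh => hz2z1 y hh hyz
              have hyG : y ∈ G.fv := (ht y hy).resolve_right hnz2
              exact hz1A y hyz (hAG hyG)
            · rw [if_neg hyz]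
          constructor
          · intro p hp
            rw [hev1 p.1 (fun y hy => hv1 y (mem_varsOf.2 ⟨p, hp, Or.inl hy⟩)),
              hev1 p.2 (fun y hy => hv1 y (mem_varsOf.2 ⟨p, hp, Or.inr hy⟩))]
            exact hs1 p hp
          · intro p hp
            rw [hev2 p.1 (fun y hy => hv2 y (mem_varsOf.2 ⟨p, hp, Or.inl hy⟩)),
              hev2 p.2 (fun y hy => hv2 y (mem_varsOf.2 ⟨p, hp, Or.inr hy⟩))]
            exact hs2 p hp
      · rintro ⟨g, hg, hs⟩
        classical
        rw [SatEqs_append] at hs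
        constructor
        · refine ⟨fun y => if y ∈ zs1 then g y else h y, fun y hy => if_neg hy, ?_⟩
          have hev : ∀ t : FOTerm L, (∀ y ∈ t.vars, y ∈ F.fv ∨ y ∈ zs1) →
              t.eval M (fun y => if y ∈ zs1 then g y else h y) = t.eval M g := by
            intro t ht
            apply eval_congr
            intro y hy
            show (if y ∈ zs1 then g y else h y) = g y
            by_cases hyz : y ∈ zs1
            · rw [if_pos hyz]
            · rw [if_neg hyz]
              have hyF : y ∈ F.fv := (ht y hy).resolve_right hyz
              have hy2 : y ∉ zs2 := fun hh => hz2A y hh (hAF hyF)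
              rw [hg y (by simp [hyz, hy2])]
          intro p hp
          rw [hev p.1 (fun y hy => hv1 y (mem_varsOf.2 ⟨p, hp, Or.inl hy⟩)),
            hev p.2 (fun y hy => hv1 y (mem_varsOf.2 ⟨p, hp, Or.inr hy⟩))]
          exact hs.1 p hp
        · refine ⟨fun y => if y ∈ zs2 then g y else h y, fun y hy => if_neg hy, ?_⟩
          have hev : ∀ t : FOTerm L, (∀ y ∈ t.vars, y ∈ G.fv ∨ y ∈ zs2) →
              t.eval M (fun y => if y ∈ zs2 then g y else h y) = t.eval M g := by
            intro t ht
            apply eval_congr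
            intro y hy
            show (if y ∈ zs2 then g y else h y) = g y
            by_cases hyz : y ∈ zs2
            · rw [if_pos hyz]
            · rw [if_neg hyz]
              have hyG : y ∈ G.fv := (ht y hy).resolve_right hyz
              have hy1 : y ∉ zs1 := fun hh => hz1A y hh (hAG hyG)
              rw [hg y (by simp [hyz, hy1])]
          intro p hp
          rw [hev p.1 (fun y hy => hv2 y (mem_varsOf.2 ⟨p, hp, Or.inl hy⟩)),
            hev p.2 (fun y hy => hv2 y (mem_varsOf.2 ⟨p, hp, Or.inr hy⟩))]
          exact hs.2 p hp
  | @ex x F hF ihF =>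
    intro A hA
    rcases ihF (insert x A) (fun y hy => by
        by_cases hyx : y = x
        · simp [hyx]
        · simp only [Finset.coe_insert, Set.mem_insert_iff]
          right
          refine hA ?_
          show y ∈ FOForm.fv (.ex x F)
          simp only [FOForm.fv, Finset.mem_erase]
          exact ⟨hyx, hy⟩) with hFbad | ⟨zs, eqs, hnd, hav, hv, hsem⟩
    · left
      rintro M h ⟨d, hd⟩
      exact hFbad M _ hd
    right
    classical
    obtain ⟨x', hx'S⟩ : ∃ x', x' ∉ A ∪ zs.toFinset ∪ varsOf eqs ∪ {x} :=
      ⟨freshVar _, freshVar_not_mem _⟩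
    simp only [Finset.mem_union, Finset.mem_singleton, List.mem_toFinset, not_or] at hx'S
    obtain ⟨⟨⟨hx'A, hx'zs⟩, hx'v⟩, hx'x⟩ := hx'S
    have hxzs : x ∉ zs := fun hh => hav x hh (Finset.mem_insert_self x A)
    refine ⟨x' :: zs, eqs.map fun p => (p.1.applyT (renS x x'), p.2.applyT (renS x x')),
      List.nodup_cons.2 ⟨hx'zs, hnd⟩, ?_, ?_, ?_⟩
    · intro z hz
      rcases List.mem_cons.1 hz with rfl | hz
      · exact hx'A
      · exact fun hh => hav z hz (Finset.mem_insert_of_mem hh)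
    · intro y hy
      simp only [mem_varsOf, List.mem_map] at hy
      obtain ⟨p, ⟨q, hq, rfl⟩, hp⟩ := hy
      have : ∃ z ∈ varsOf eqs, y ∈ ((renS x x' : ℕ → FOTerm L) z).vars := by
        rcases hp with hp | hp
        · obtain ⟨z, hz, hyz⟩ := (mem_vars_applyT _ y q.1).1 hp
          exact ⟨z, mem_varsOf.2 ⟨q, hq, Or.inl hz⟩, hyz⟩
        · obtain ⟨z, hz, hyz⟩ := (mem_vars_applyT _ y q.2).1 hp
          exact ⟨z, mem_varsOf.2 ⟨q, hq, Or.inr hz⟩, hyz⟩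
      obtain ⟨z, hz, hyz⟩ := this
      by_cases hzx : z = x
      · subst hzx
        simp only [renS, if_pos rfl, ↓reduceIte, FOTerm.vars, Finset.mem_singleton] at hyz
        rw [hyz]
        right; exact (List.mem_cons_self (a := x') (l := zs))
      · simp only [renS, if_neg hzx, FOTerm.vars, Finset.mem_singleton] at hyz
        rw [hyz]
        rcases hv z hz with hzF | hzzs
        · left
          show z ∈ FOForm.fv (.ex x F)
          simp only [FOForm.fv, Finset.mem_erase]
          exact ⟨hzx, hzF⟩
        · right; exact List.mem_cons_of_mem _ hzzs
    · intro M h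
      have h1 : ESat M h (.ex x F) ↔ ∃ d, ESat M (Function.update h x d) F := Iff.rfl
      rw [h1]
      have h2 : (∃ d, ESat M (Function.update h x d) F) ↔ SysSat M h (x :: zs) eqs := by
        constructor
        · rintro ⟨d, hd⟩
          obtain ⟨g, hg, hs⟩ := (hsem M _).1 hd
          refine ⟨g, fun y hy => ?_, hs⟩
          simp only [List.mem_cons, not_or] at hy
          rw [hg y hy.2, Function.update_of_ne hy.1]
        · rintro ⟨g, hg, hs⟩
          refine ⟨g x, (hsem M _).2 ⟨g, fun y hy => ?_, hs⟩⟩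
          by_cases hyx : y = x
          · subst hyx; simp
          · rw [Function.update_of_ne hyx, hg y (by simp [hyx, hy])]
      rw [h2]
      exact renameZ M h x x' zs eqs hx'v hx'zs hx'x

end Aux3
section Aux4
variable {L : FOLang}

theorem SatEqs_cons (M : FOStruc L) (g : ℕ → M.carrier) (p : FOTerm L × FOTerm L)
    (rest : List (FOTerm L × FOTerm L)) :
    SatEqs M g (p :: rest) ↔ p.1.eval M g = p.2.eval M g ∧ SatEqs M g rest := by
  simp only [SatEqs, List.mem_cons]
  constructor
  · intro h
    exact ⟨h p (Or.inl rfl), fun q hq => h q (Or.inr hq)⟩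
  · rintro ⟨h1, h2⟩ q hq
    rcases hq with rfl | hq
    · exact h1
    · exact h2 q hq

theorem varsOf_tail {x : ℕ} {p : FOTerm L × FOTerm L} {rest : List (FOTerm L × FOTerm L)}
    (h : x ∈ varsOf rest) : x ∈ varsOf (p :: rest) := by
  rcases mem_varsOf.1 h with ⟨q, hq, hx⟩
  exact mem_varsOf.2 ⟨q, List.mem_cons_of_mem p hq, hx⟩

theorem mem_varsOf_cons {x : ℕ} {p : FOTerm L × FOTerm L} {rest : List (FOTerm L × FOTerm L)} :
    x ∈ varsOf (p :: rest) ↔ x ∈ p.1.vars ∨ x ∈ p.2.vars ∨ x ∈ varsOf rest := by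
  constructor
  · intro h
    rcases mem_varsOf.1 h with ⟨q, hq, hx⟩
    rcases List.mem_cons.1 hq with rfl | hq
    · tauto
    · exact Or.inr (Or.inr (mem_varsOf.2 ⟨q, hq, hx⟩))
  · rintro (hx | hx | hx)
    · exact mem_varsOf.2 ⟨p, (List.mem_cons_self (a := p) (l := rest)), Or.inl hx⟩
    · exact mem_varsOf.2 ⟨p, (List.mem_cons_self (a := p) (l := rest)), Or.inr hx⟩
    · exact varsOf_tail hx

/-- The result of unification on a list of pairs of terms. -/
def UnifyRes (eqs : List (FOTerm L × FOTerm L)) : Prop :=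
  (∀ M : FOStruc L, IsFEA M → ∀ g : ℕ → M.carrier, ¬ SatEqs M g eqs) ∨
  ∃ U : List (ℕ × FOTerm L),
    (U.map Prod.fst).Nodup ∧
    (∀ p ∈ U, ∀ q ∈ U, p.1 ∉ q.2.vars) ∧
    (∀ p ∈ U, p.1 ∈ varsOf eqs ∧ ∀ y ∈ p.2.vars, y ∈ varsOf eqs) ∧
    ∀ M : FOStruc L, IsFEA M → ∀ g : ℕ → M.carrier, SatEqs M g eqs ↔ SatU M g U

/-- the substitution determined by a solved list -/
def substU : List (ℕ × FOTerm L) → ℕ → FOTerm L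
  | [], y => .var y
  | p :: U, y => if y = p.1 then p.2 else substU U y

theorem substU_cases (U : List (ℕ × FOTerm L)) (y : ℕ) :
    (∃ s, (y, s) ∈ U ∧ substU U y = s) ∨ (y ∉ U.map Prod.fst ∧ substU U y = .var y) := by
  induction U with
  | nil => exact Or.inr ⟨by simp, rfl⟩
  | cons p U ih =>
    by_cases hy : y = p.1
    · subst hy
      exact Or.inl ⟨p.2, by simpa using Or.inl rfl, by simp [substU]⟩
    · rcases ih with ⟨s, hs, he⟩ | ⟨hnm, he⟩
      · exact Or.inl ⟨s, List.mem_cons_of_mem p hs, by simp [substU, hy, he]⟩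
      · refine Or.inr ⟨?_, by simp [substU, hy, he]⟩
        simp only [List.map_cons, List.mem_cons, not_or]
        exact ⟨hy, fun h => hnm (by simpa using h)⟩

theorem substU_mem_lhs {U : List (ℕ × FOTerm L)} {y : ℕ} (h : y ∈ U.map Prod.fst) :
    ∃ s, (y, s) ∈ U ∧ substU U y = s := by
  rcases substU_cases U y with h' | ⟨h', _⟩
  · exact h'
  · exact absurd h h'

/-- substitution of a single variable -/
def sub1 (x : ℕ) (t : FOTerm L) : ℕ → FOTerm L := fun y => if y = x then t else .var y

def substPair (x : ℕ) (t : FOTerm L) (rest : List (FOTerm L × FOTerm L)) :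
    List (FOTerm L × FOTerm L) :=
  rest.map fun p => (p.1.applyT (sub1 x t), p.2.applyT (sub1 x t))

theorem sub1_eval (M : FOStruc L) (g : ℕ → M.carrier) (x : ℕ) (t : FOTerm L)
    (hgx : g x = t.eval M g) (u : FOTerm L) :
    (u.applyT (sub1 x t)).eval M g = u.eval M g := by
  rw [eval_applyT]
  apply eval_congr
  intro y _
  by_cases hyx : y = x
  · subst hyx; simp [sub1, ← hgx]
  · simp [sub1, hyx, FOTerm.eval]

theorem SatEqs_substPair (M : FOStruc L) (g : ℕ → M.carrier) (x : ℕ) (t : FOTerm L)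
    (hgx : g x = t.eval M g) (rest : List (FOTerm L × FOTerm L)) :
    SatEqs M g rest ↔ SatEqs M g (substPair x t rest) := by
  constructor
  · intro hs p hp
    simp only [substPair, List.mem_map] at hp
    obtain ⟨q, hq, rfl⟩ := hp
    rw [sub1_eval M g x t hgx, sub1_eval M g x t hgx]
    exact hs q hq
  · intro hs q hq
    have := hs _ (List.mem_map.2 ⟨q, hq, rfl⟩)
    rwa [sub1_eval M g x t hgx, sub1_eval M g x t hgx] at this

theorem mem_varsOf_substPair {x : ℕ} {t : FOTerm L} {rest : List (FOTerm L × FOTerm L)} {y : ℕ}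
    (h : y ∈ varsOf (substPair x t rest)) :
    y ∈ t.vars ∨ (y ∈ varsOf rest ∧ y ≠ x) := by
  rcases mem_varsOf.1 h with ⟨p, hp, hy⟩
  simp only [substPair, List.mem_map] at hp
  obtain ⟨q, hq, rfl⟩ := hp
  have : ∃ z, (z ∈ q.1.vars ∨ z ∈ q.2.vars) ∧ y ∈ ((sub1 x t : ℕ → FOTerm L) z).vars := by
    rcases hy with hy | hy
    · obtain ⟨z, hz, hyz⟩ := (mem_vars_applyT _ y q.1).1 hy
      exact ⟨z, Or.inl hz, hyz⟩
    · obtain ⟨z, hz, hyz⟩ := (mem_vars_applyT _ y q.2).1 hy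
      exact ⟨z, Or.inr hz, hyz⟩
  obtain ⟨z, hz, hyz⟩ := this
  by_cases hzx : z = x
  · subst hzx
    simp only [sub1, if_pos rfl] at hyz
    exact Or.inl hyz
  · simp only [sub1, if_neg hzx, FOTerm.vars, Finset.mem_singleton] at hyz
    subst hyz
    exact Or.inr ⟨mem_varsOf.2 ⟨q, hq, hz⟩, hzx⟩

/-- The variable elimination step. -/
theorem elim_var (x : ℕ) (t : FOTerm L) (rest : List (FOTerm L × FOTerm L))
    (hx : x ∉ t.vars) (IH : UnifyRes (substPair x t rest)) :
    UnifyRes ((FOTerm.var x, t) :: rest) := by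
  have hxsp : x ∉ varsOf (substPair x t rest) := by
    intro hc
    rcases mem_varsOf_substPair hc with hc | ⟨_, hc⟩
    · exact hx hc
    · exact hc rfl
  rcases IH with hbad | ⟨U, hnd, hpair, hvars, hsemU⟩
  · left
    intro M hM g hs
    rw [SatEqs_cons] at hs
    exact hbad M hM g ((SatEqs_substPair M g x t hs.1 rest).1 hs.2)
  · right
    have hxlhs : x ∉ U.map Prod.fst := by
      intro hc
      obtain ⟨s, hsU, _⟩ := substU_mem_lhs hc
      exact hxsp (hvars _ hsU).1
    set t' := t.applyT (substU U) with ht'def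
    have ht'vars : ∀ y ∈ t'.vars, y ∉ U.map Prod.fst ∧ y ≠ x ∧
        (y ∈ t.vars ∨ y ∈ varsOf (substPair x t rest)) := by
      intro y hy
      obtain ⟨z, hz, hyz⟩ := (mem_vars_applyT _ y t).1 hy
      rcases substU_cases U z with ⟨s, hsU, he⟩ | ⟨hnm, he⟩
      · rw [he] at hyz
        refine ⟨?_, ?_, Or.inr ((hvars _ hsU).2 y hyz)⟩
        · intro hc
          obtain ⟨s', hs'U, _⟩ := substU_mem_lhs hc
          exact hpair _ hs'U _ hsU hyz
        · intro hc
          exact hxsp (hc ▸ (hvars _ hsU).2 y hyz)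
      · rw [he] at hyz
        simp only [FOTerm.vars, Finset.mem_singleton] at hyz
        subst hyz
        exact ⟨hnm, fun hc => hx (hc ▸ hz), Or.inl hz⟩
    have hkey : ∀ (M : FOStruc L) (g : ℕ → M.carrier), SatU M g U →
        t'.eval M g = t.eval M g := by
      intro M g hU
      rw [ht'def, eval_applyT]
      apply eval_congr
      intro y hy
      rcases substU_cases U y with ⟨s, hsU, he⟩ | ⟨_, he⟩
      · rw [he]; exact (hU _ hsU).symm
      · rw [he]; rfl
    refine ⟨(x, t') :: U, ?_, ?_, ?_, ?_⟩
    · simp only [List.map_cons, List.nodup_cons]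
      exact ⟨hxlhs, hnd⟩
    · intro p hp q hq
      rcases List.mem_cons.1 hp with rfl | hp <;> rcases List.mem_cons.1 hq with rfl | hq
      · exact fun hc => (ht'vars _ hc).2.1 rfl
      · show x ∉ q.2.vars
        intro hc
        exact hxsp ((hvars q hq).2 x hc)
      · show p.1 ∉ t'.vars
        intro hc
        exact (ht'vars _ hc).1 (List.mem_map.2 ⟨p, hp, rfl⟩)
      · exact hpair p hp q hq
    · intro p hp
      rcases List.mem_cons.1 hp with rfl | hp
      · refine ⟨mem_varsOf_cons.2 (Or.inl (by simp [FOTerm.vars])), ?_⟩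
        intro y hy
        rcases (ht'vars y hy).2.2 with hy' | hy'
        · exact mem_varsOf_cons.2 (Or.inr (Or.inl hy'))
        · rcases mem_varsOf_substPair hy' with hy'' | ⟨hy'', _⟩
          · exact mem_varsOf_cons.2 (Or.inr (Or.inl hy''))
          · exact varsOf_tail hy''
      · have h1 := (hvars p hp).1
        have h2 := (hvars p hp).2
        constructor
        · rcases mem_varsOf_substPair h1 with hy | ⟨hy, _⟩
          · exact mem_varsOf_cons.2 (Or.inr (Or.inl hy))
          · exact varsOf_tail hy
        · intro y hy
          rcases mem_varsOf_substPair (h2 y hy) with hy' | ⟨hy', _⟩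
          · exact mem_varsOf_cons.2 (Or.inr (Or.inl hy'))
          · exact varsOf_tail hy'
    · intro M hM g
      rw [SatEqs_cons]
      constructor
      · rintro ⟨h1, h2⟩
        have h1' : g x = t.eval M g := h1
        have hsp := (SatEqs_substPair M g x t h1' rest).1 h2
        have hU := (hsemU M hM g).1 hsp
        intro p hp
        rcases List.mem_cons.1 hp with rfl | hp
        · show g x = t'.eval M g
          rw [hkey M g hU]
          exact h1'
        · exact hU p hp
      · intro hU'
        have hU : SatU M g U := fun p hp => hU' p (List.mem_cons_of_mem _ hp)
        have hx1 : g x = t.eval M g := by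
          have := hU' (x, t') ((List.mem_cons_self (a := _) (l := _)))
          rw [hkey M g hU] at this
          exact this
        refine ⟨hx1, ?_⟩
        exact (SatEqs_substPair M g x t hx1 rest).2 ((hsemU M hM g).2 hU)

theorem varsOf_swap (s t : FOTerm L) (rest : List (FOTerm L × FOTerm L)) :
    varsOf ((t, s) :: rest) = varsOf ((s, t) :: rest) := by
  show t.vars ∪ s.vars ∪ varsOf rest = s.vars ∪ t.vars ∪ varsOf rest
  rw [Finset.union_comm t.vars]

theorem SatEqs_swap (M : FOStruc L) (g : ℕ → M.carrier) (s t : FOTerm L)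
    (rest : List (FOTerm L × FOTerm L)) :
    SatEqs M g ((s, t) :: rest) ↔ SatEqs M g ((t, s) :: rest) := by
  rw [SatEqs_cons, SatEqs_cons]
  constructor
  · rintro ⟨h1, h2⟩; exact ⟨h1.symm, h2⟩
  · rintro ⟨h1, h2⟩; exact ⟨h1.symm, h2⟩

theorem UnifyRes_swap (s t : FOTerm L) (rest : List (FOTerm L × FOTerm L))
    (h : UnifyRes ((t, s) :: rest)) : UnifyRes ((s, t) :: rest) := by
  rcases h with hbad | ⟨U, hnd, hpair, hvars, hsem⟩
  · left
    intro M hM g hs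
    exact hbad M hM g ((SatEqs_swap M g s t rest).1 hs)
  · right
    refine ⟨U, hnd, hpair, ?_, ?_⟩
    · intro p hp
      rw [← varsOf_swap]
      exact hvars p hp
    · intro M hM g
      rw [SatEqs_swap]
      exact hsem M hM g

end Aux4
section Aux5
variable {L : FOLang}

theorem UnifyRes_transfer (eqs eqs' : List (FOTerm L × FOTerm L))
    (hv : ∀ y ∈ varsOf eqs', y ∈ varsOf eqs)
    (hsem : ∀ M : FOStruc L, IsFEA M → ∀ g : ℕ → M.carrier, SatEqs M g eqs ↔ SatEqs M g eqs')
    (h : UnifyRes eqs') : UnifyRes eqs := by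
  rcases h with hbad | ⟨U, hnd, hpair, hvars, hsemU⟩
  · left
    intro M hM g hs
    exact hbad M hM g ((hsem M hM g).1 hs)
  · right
    refine ⟨U, hnd, hpair, fun p hp => ⟨hv _ (hvars p hp).1, fun y hy => hv _ ((hvars p hp).2 y hy)⟩,
      fun M hM g => (hsem M hM g).trans (hsemU M hM g)⟩

theorem eqsSize_append (l1 l2 : List (FOTerm L × FOTerm L)) :
    eqsSize (l1 ++ l2) = eqsSize l1 + eqsSize l2 := by
  induction l1 with
  | nil => simp [eqsSize]
  | cons p l ih => simp [eqsSize, ih]; omega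

theorem eqsSize_ofFn {k : ℕ} (fn : Fin k → FOTerm L × FOTerm L) :
    eqsSize (List.ofFn fn) = Finset.univ.sum fun i => termSize (fn i).1 + termSize (fn i).2 := by
  induction k with
  | zero => simp [eqsSize]
  | succ k ih =>
    rw [List.ofFn_succ]
    show termSize (fn 0).1 + termSize (fn 0).2 + eqsSize (List.ofFn fun i => fn i.succ) = _
    rw [ih, Fin.sum_univ_succ]

theorem unify (eqs0 : List (FOTerm L × FOTerm L)) : UnifyRes eqs0 := by
  classical
  suffices H : ∀ n m (eqs : List (FOTerm L × FOTerm L)),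
      (varsOf eqs).card ≤ n → eqsSize eqs ≤ m → UnifyRes eqs from H _ _ _ le_rfl le_rfl
  intro n
  induction n using Nat.strong_induction_on with
  | _ n ihn =>
  intro m
  induction m using Nat.strong_induction_on with
  | _ m ihm =>
  intro eqs hcard hsize
  cases eqs with
  | nil =>
    right
    exact ⟨[], by simp, by simp, by simp, fun M hM g =>
      ⟨fun _ p hp => absurd hp (List.not_mem_nil), fun _ p hp => absurd hp (List.not_mem_nil)⟩⟩
  | cons hd rest =>
  obtain ⟨s, t⟩ := hd
  have varPath : ∀ (x : ℕ) (u : FOTerm L) (rest' : List (FOTerm L × FOTerm L)),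
      (varsOf ((FOTerm.var x, u) :: rest')).card ≤ n → eqsSize rest' < m →
      UnifyRes ((FOTerm.var x, u) :: rest') := by
    intro x u rest' hc hsz
    by_cases hux : u = .var x
    · subst hux
      refine UnifyRes_transfer _ rest' (fun y hy => varsOf_tail hy) (fun M hM g => ?_)
        (ihm _ hsz rest' (le_trans (Finset.card_le_card fun y hy => varsOf_tail hy) hc) le_rfl)
      rw [SatEqs_cons]
      exact ⟨fun h => h.2, fun h => ⟨rfl, h⟩⟩
    · by_cases hxu : x ∈ u.vars
      · left
        intro M hM g hs
        rw [SatEqs_cons] at hs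
        exact hM.occ x u hux hxu g hs.1
      · apply elim_var x u rest' hxu
        have hxin : x ∈ varsOf ((FOTerm.var x, u) :: rest') :=
          mem_varsOf_cons.2 (Or.inl (by simp [FOTerm.vars]))
        have hsub : varsOf (substPair x u rest') ⊆ (varsOf ((FOTerm.var x, u) :: rest')).erase x := by
          intro y hy
          rcases mem_varsOf_substPair hy with hy' | ⟨hy', hyx⟩
          · exact Finset.mem_erase.2
              ⟨fun hc' => hxu (hc' ▸ hy'), mem_varsOf_cons.2 (Or.inr (Or.inl hy'))⟩
          · exact Finset.mem_erase.2 ⟨hyx, varsOf_tail hy'⟩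
        have hlt : (varsOf (substPair x u rest')).card < n :=
          lt_of_le_of_lt (Finset.card_le_card hsub)
            (lt_of_lt_of_le (Finset.card_erase_lt_of_mem hxin) hc)
        exact ihn _ hlt (eqsSize (substPair x u rest')) _ le_rfl le_rfl
  have hszrest : eqsSize rest < m := by
    have h1 := termSize_pos s
    have h2 := termSize_pos t
    have : eqsSize ((s, t) :: rest) = termSize s + termSize t + eqsSize rest := rfl
    omega
  cases s with
  | var x => exact varPath x t rest hcard hszrest
  | func f ss =>
    cases t with
    | var y =>
      apply UnifyRes_swap
      refine varPath y (.func f ss) rest ?_ ?_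
      · rw [varsOf_swap]
        exact hcard
      · exact hszrest
    | func g2 ts =>
      by_cases hfg : f = g2
      · subst hfg
        set newEqs := (List.ofFn fun i => (ss i, ts i)) ++ rest with hnew
        have hv : ∀ y ∈ varsOf newEqs, y ∈ varsOf ((FOTerm.func f ss, FOTerm.func f ts) :: rest) := by
          intro y hy
          rcases mem_varsOf_append.1 hy with hy | hy
          · rcases mem_varsOf.1 hy with ⟨p, hp, hyp⟩
            obtain ⟨i, hi⟩ := (List.mem_ofFn).1 hp
            rcases hyp with hyp | hyp
            · refine mem_varsOf_cons.2 (Or.inl (mem_vars_func.2 ⟨i, ?_⟩))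
              rw [← hi] at hyp; exact hyp
            · refine mem_varsOf_cons.2 (Or.inr (Or.inl (mem_vars_func.2 ⟨i, ?_⟩)))
              rw [← hi] at hyp; exact hyp
          · exact varsOf_tail hy
        have hsem : ∀ M : FOStruc L, IsFEA M → ∀ g : ℕ → M.carrier,
            SatEqs M g ((FOTerm.func f ss, FOTerm.func f ts) :: rest) ↔ SatEqs M g newEqs := by
          intro M hM g
          rw [SatEqs_cons, hnew, SatEqs_append]
          have hofn : SatEqs M g (List.ofFn fun i => (ss i, ts i)) ↔
              ∀ i, (ss i).eval M g = (ts i).eval M g := by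
            constructor
            · intro hh i
              exact hh (ss i, ts i) ((List.mem_ofFn).2 ⟨i, rfl⟩)
            · intro hh p hp
              obtain ⟨i, hi⟩ := (List.mem_ofFn).1 hp
              rw [← hi]
              exact hh i
          rw [hofn]
          have hhead : (FOTerm.func f ss).eval M g = (FOTerm.func f ts).eval M g ↔
              ∀ i, (ss i).eval M g = (ts i).eval M g := by
            constructor
            · intro hh i
              have := hM.inj f hh
              exact congrFun this i
            · intro hh
              show M.funcs f _ = M.funcs f _
              congr 1
              funext i
              exact hh i
          rw [hhead]
        refine UnifyRes_transfer _ newEqs hv hsem (ihm (eqsSize newEqs) ?_ newEqs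
          (le_trans (Finset.card_le_card hv) hcard) le_rfl)
        have hsz : eqsSize newEqs < eqsSize ((FOTerm.func f ss, FOTerm.func f ts) :: rest) := by
          have h1 : eqsSize ((FOTerm.func f ss, FOTerm.func f ts) :: rest) =
              (1 + Finset.univ.sum fun i => termSize (ss i)) +
              (1 + Finset.univ.sum fun i => termSize (ts i)) + eqsSize rest := rfl
          rw [hnew, eqsSize_append, eqsSize_ofFn, h1, Finset.sum_add_distrib]
          simp only [Prod.fst, Prod.snd]
          omega
        exact lt_of_lt_of_le hsz hsize
      · left
        intro M hM g hs
        rw [SatEqs_cons] at hs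
        exact hM.disj f g2 hfg _ _ hs.1

end Aux5
section Aux6
variable {L : FOLang}

theorem substU_eq_of_mem {U : List (ℕ × FOTerm L)} (hnd : (U.map Prod.fst).Nodup)
    {a : ℕ} {s : FOTerm L} (h : (a, s) ∈ U) : substU U a = s := by
  induction U with
  | nil => exact absurd h (List.not_mem_nil)
  | cons q U ih =>
    rcases List.mem_cons.1 h with h | h
    · rw [← h]
      simp [substU]
    · have hq : a ≠ q.1 := by
        intro hc
        have : a ∈ U.map Prod.fst := List.mem_map.2 ⟨(a, s), h, rfl⟩
        rw [List.map_cons, List.nodup_cons] at hnd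
        exact hnd.1 (hc ▸ this)
      simp only [substU, if_neg hq]
      exact ih (by rw [List.map_cons, List.nodup_cons] at hnd; exact hnd.2) h

theorem dropBound (M : FOStruc L) (h : ℕ → M.carrier) (zs : List ℕ)
    (U : List (ℕ × FOTerm L)) (hnd : (U.map Prod.fst).Nodup)
    (hpair : ∀ p ∈ U, ∀ q ∈ U, p.1 ∉ q.2.vars) :
    USat M h zs U ↔ USat M h zs (U.filter fun p => decide (p.1 ∉ zs)) := by
  classical
  set U₀ := U.filter fun p => decide (p.1 ∈ zs) with hU₀
  have hndU₀ : (U₀.map Prod.fst).Nodup :=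
    ((List.filter_sublist (l := U)).map Prod.fst).nodup hnd
  constructor
  · rintro ⟨g, hg, hs⟩
    exact ⟨g, hg, fun p hp => hs p (List.mem_of_mem_filter hp)⟩
  · rintro ⟨g, hg, hs⟩
    refine ⟨fun y => if y ∈ U₀.map Prod.fst then (substU U₀ y).eval M g else g y,
      fun y hy => ?_, ?_⟩
    · have hy0 : y ∉ U₀.map Prod.fst := by
        intro hc
        obtain ⟨r, hr, hr1⟩ := List.mem_map.1 hc
        have := List.mem_filter.1 hr
        simp only [decide_eq_true_eq] at this
        exact hy (hr1 ▸ this.2)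
      show (if y ∈ U₀.map Prod.fst then (substU U₀ y).eval M g else g y) = h y
      rw [if_neg hy0]
      exact hg y hy
    · intro p hp
      have hcongr : ∀ u : FOTerm L, (∀ q ∈ U, q.1 ∉ u.vars) →
          u.eval M (fun y => if y ∈ U₀.map Prod.fst then (substU U₀ y).eval M g else g y)
            = u.eval M g := by
        intro u hu
        apply eval_congr
        intro y hy
        have : y ∉ U₀.map Prod.fst := by
          intro hc
          obtain ⟨r, hr, hr1⟩ := List.mem_map.1 hc
          exact hu r (List.mem_of_mem_filter hr) (hr1 ▸ hy)
        simp only [if_neg this]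
      have hp2 : ∀ q ∈ U, q.1 ∉ p.2.vars := fun q hq => hpair q hq p hp
      by_cases hpz : p.1 ∈ zs
      · have hpU₀ : p ∈ U₀ := List.mem_filter.2 ⟨hp, by simp [hpz]⟩
        have hmem : p.1 ∈ U₀.map Prod.fst := List.mem_map.2 ⟨p, hpU₀, rfl⟩
        show (if p.1 ∈ U₀.map Prod.fst then _ else _) = _
        rw [if_pos hmem, hcongr p.2 hp2]
        have : (p.1, p.2) ∈ U₀ := hpU₀
        rw [substU_eq_of_mem hndU₀ this]
      · have hmem : p.1 ∉ U₀.map Prod.fst := by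
          intro hc
          obtain ⟨r, hr, hr1⟩ := List.mem_map.1 hc
          have := List.mem_filter.1 hr
          simp only [decide_eq_true_eq] at this
          exact hpz (hr1 ▸ this.2)
        show (if p.1 ∈ U₀.map Prod.fst then _ else _) = _
        rw [if_neg hmem, hcongr p.2 hp2]
        exact hs p (List.mem_filter.2 ⟨hp, by simp [hpz]⟩)

theorem elimParams (zs : List ℕ) : ∀ (n : ℕ) (U : List (ℕ × FOTerm L)), U.length ≤ n →
    (U.map Prod.fst).Nodup → (∀ p ∈ U, p.1 ∉ zs) → (∀ p ∈ U, ∀ q ∈ U, p.1 ∉ q.2.vars) →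
    ∃ U₂ : List (ℕ × FOTerm L),
      (U₂.map Prod.fst).Nodup ∧ (∀ p ∈ U₂, p.1 ∉ zs) ∧
      (∀ p ∈ U₂, ∀ q ∈ U₂, p.1 ∉ q.2.vars) ∧
      (∀ p ∈ U₂, ∀ z ∈ zs, p.2 ≠ .var z) ∧
      ∀ (M : FOStruc L) (h : ℕ → M.carrier), USat M h zs U ↔ USat M h zs U₂ := by
  intro n
  induction n with
  | zero =>
    intro U hlen _ _ _
    have hU : U = [] := List.eq_nil_of_length_eq_zero (Nat.le_zero.1 hlen)
    subst hU
    exact ⟨[], by simp, by simp, by simp, by simp, fun M h => Iff.rfl⟩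
  | succ n ih =>
    intro U hlen hnd hlhs hpair
    classical
    by_cases hex : ∃ p ∈ U, ∃ z ∈ zs, p.2 = FOTerm.var z
    · obtain ⟨p, hp, z, hz, hpz⟩ := hex
      have hndU : U.Nodup := hnd.of_map
      set U' := (U.erase p).map fun q => (q.1, q.2.applyT (sub1 z (.var p.1))) with hU'
      have hmapfst : U'.map Prod.fst = (U.erase p).map Prod.fst := by
        rw [hU', List.map_map]; rfl
      have hnd' : (U'.map Prod.fst).Nodup := by
        rw [hmapfst]
        exact ((List.erase_sublist (a := p) (l := U)).map Prod.fst).nodup hnd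
      have hlen' : U'.length ≤ n := by
        have := List.length_erase_of_mem hp
        have h2 : U'.length = (U.erase p).length := List.length_map _
        omega
      have hp1z : p.1 ≠ z := fun hc => hlhs p hp (hc ▸ hz)
      have hmemU' : ∀ q' ∈ U', ∃ q ∈ U.erase p, q' = (q.1, q.2.applyT (sub1 z (.var p.1))) := by
        intro q' hq'
        obtain ⟨q, hq, hq1⟩ := List.mem_map.1 hq'
        exact ⟨q, hq, hq1.symm⟩
      have hvars' : ∀ (u : FOTerm L) (y : ℕ), y ∈ (u.applyT (sub1 z (.var p.1))).vars →
          y = p.1 ∨ (y ∈ u.vars ∧ y ≠ z) := by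
        intro u y hy
        obtain ⟨w, hw, hyw⟩ := (mem_vars_applyT _ y u).1 hy
        by_cases hwz : w = z
        · subst hwz
          simp only [sub1, if_pos rfl, ↓reduceIte, FOTerm.vars, Finset.mem_singleton] at hyw
          exact Or.inl hyw
        · simp only [sub1, if_neg hwz, FOTerm.vars, Finset.mem_singleton] at hyw
          subst hyw
          exact Or.inr ⟨hw, hwz⟩
      have hlhs' : ∀ q ∈ U', q.1 ∉ zs := by
        intro q hq
        obtain ⟨q0, hq0, rfl⟩ := hmemU' q hq
        exact hlhs q0 (List.mem_of_mem_erase hq0)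
      have hpair' : ∀ q ∈ U', ∀ r ∈ U', q.1 ∉ r.2.vars := by
        intro q hq r hr
        obtain ⟨q0, hq0, rfl⟩ := hmemU' q hq
        obtain ⟨r0, hr0, rfl⟩ := hmemU' r hr
        intro hc
        rcases hvars' r0.2 q0.1 hc with hc' | ⟨hc', _⟩
        · have hq0U : q0 ∈ U := List.mem_of_mem_erase hq0
          have hq0p : q0 ≠ p := (hndU.mem_erase_iff.1 hq0).1
          exact hq0p (List.inj_on_of_nodup_map hnd hq0U hp hc')
        · exact hpair q0 (List.mem_of_mem_erase hq0) r0 (List.mem_of_mem_erase hr0) hc'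
      obtain ⟨U₂, h1, h2, h3, h4, h5⟩ := ih U' hlen' hnd' hlhs' hpair'
      refine ⟨U₂, h1, h2, h3, h4, fun M h => Iff.trans ?_ (h5 M h)⟩
      constructor
      · rintro ⟨g, hg, hs⟩
        have hgz : g z = (FOTerm.var p.1).eval M g := by
          have := hs p hp
          rw [hpz] at this
          exact this.symm
        refine ⟨g, hg, ?_⟩
        intro q hq
        obtain ⟨q0, hq0, rfl⟩ := hmemU' q hq
        show g q0.1 = (q0.2.applyT (sub1 z (.var p.1))).eval M g
        rw [sub1_eval M g z (.var p.1) hgz]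
        exact hs q0 (List.mem_of_mem_erase hq0)
      · rintro ⟨g', hg', hs'⟩
        refine ⟨Function.update g' z (g' p.1), fun y hy => ?_, ?_⟩
        · have hyz : y ≠ z := fun hc => hy (hc ▸ hz)
          rw [Function.update_of_ne hyz]
          exact hg' y hy
        · have hkey : ∀ u : FOTerm L,
              u.eval M (Function.update g' z (g' p.1)) =
                (u.applyT (sub1 z (.var p.1))).eval M g' := by
            intro u
            rw [eval_applyT]
            apply eval_congr
            intro y _
            by_cases hyz : y = z
            · subst hyz
              simp [sub1, FOTerm.eval]
            · rw [Function.update_of_ne hyz]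
              simp [sub1, hyz, FOTerm.eval]
          intro q hq
          by_cases hqp : q = p
          · subst hqp
            rw [hpz]
            show Function.update g' z (g' q.1) q.1 = _
            have hq1z : q.1 ≠ z := fun hc => hlhs q hq (hc ▸ hz)
            rw [Function.update_of_ne hq1z]
            show g' q.1 = FOTerm.eval M (Function.update g' z (g' q.1)) (FOTerm.var z)
            show g' q.1 = Function.update g' z (g' q.1) z
            simp
          · have hqe : q ∈ U.erase p := hndU.mem_erase_iff.2 ⟨hqp, hq⟩
            have hq1z : q.1 ≠ z := fun hc => hlhs q hq (hc ▸ hz)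
            show Function.update g' z (g' p.1) q.1 = _
            rw [Function.update_of_ne hq1z, hkey q.2]
            exact hs' _ (List.mem_map.2 ⟨q, hqe, rfl⟩)
    · push_neg at hex
      exact ⟨U, hnd, hlhs, hpair, hex, fun M h => Iff.rfl⟩

theorem dropUnused (M : FOStruc L) (h : ℕ → M.carrier) (zs : List ℕ)
    (U : List (ℕ × FOTerm L)) (hlhs : ∀ p ∈ U, p.1 ∉ zs) :
    USat M h zs U ↔ USat M h (zs.filter fun z => U.any fun p => decide (z ∈ p.2.vars)) U := by
  classical
  set zs₃ := zs.filter fun z => U.any fun p => decide (z ∈ p.2.vars) with hzs₃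
  have hsub : ∀ y ∈ zs₃, y ∈ zs := fun y hy => List.mem_of_mem_filter hy
  constructor
  · rintro ⟨g, hg, hs⟩
    refine ⟨fun y => if y ∈ zs₃ then g y else h y, fun y hy => if_neg hy, ?_⟩
    intro p hp
    have hp1 : p.1 ∉ zs₃ := fun hc => hlhs p hp (hsub _ hc)
    show (if p.1 ∈ zs₃ then g p.1 else h p.1) = _
    rw [if_neg hp1, ← hg p.1 (hlhs p hp)]
    rw [hs p hp]
    apply eval_congr
    intro y hy
    by_cases hyz : y ∈ zs₃
    · rw [if_pos hyz]
    · rw [if_neg hyz]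
      have hyzs : y ∉ zs := by
        intro hc
        apply hyz
        rw [hzs₃]
        refine List.mem_filter.2 ⟨hc, ?_⟩
        simp only [List.any_eq_true, decide_eq_true_eq]
        exact ⟨p, hp, hy⟩
      exact hg y hyzs
  · rintro ⟨g, hg, hs⟩
    refine ⟨g, fun y hy => hg y (fun hc => hy (hsub _ hc)), hs⟩

end Aux6
/-- Every EQ-formula is equivalent, with respect to the
free equality axioms, to an EQ-formula in solved form. -/
theorem exists_solved_form {L : FOLang} (hc : L.HasConst)
    (E : FOForm L) (hE : IsEQ E) :
    ∃ E' : FOForm L, SolvedForm E' ∧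
      ∀ M : FOStruc L, IsFEA M → ∀ h : ℕ → M.carrier, ESat M h E ↔ ESat M h E' := by
  classical
  rcases flatten E hE E.fv (Set.Subset.refl _) with hbad | ⟨zs, eqs, hnd, hav, hv, hsem⟩
  · refine ⟨.fal, Or.inr (Or.inl rfl), fun M hM h => ⟨fun hs => absurd hs (hbad M h), fun hf => hf.elim⟩⟩
  rcases unify eqs with hbad | ⟨U, hndU, hpair, hvars, hsemU⟩
  · refine ⟨.fal, Or.inr (Or.inl rfl), fun M hM h => ⟨fun hs => ?_, fun hf => hf.elim⟩⟩
    obtain ⟨g, hg, hsat⟩ := (hsem M h).1 hs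
    exact hbad M hM g hsat
  -- the chain up to U₁
  set U₁ := U.filter fun p => decide (p.1 ∉ zs) with hU₁
  have hndU₁ : (U₁.map Prod.fst).Nodup := ((List.filter_sublist (l := U)).map Prod.fst).nodup hndU
  have hlhs₁ : ∀ p ∈ U₁, p.1 ∉ zs := by
    intro p hp
    have := List.mem_filter.1 hp
    simpa using this.2
  have hpair₁ : ∀ p ∈ U₁, ∀ q ∈ U₁, p.1 ∉ q.2.vars := fun p hp q hq =>
    hpair p (List.mem_of_mem_filter hp) q (List.mem_of_mem_filter hq)
  obtain ⟨U₂, hnd₂, hlhs₂, hpair₂, hnv₂, hsem₂⟩ :=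
    elimParams zs U₁.length U₁ le_rfl hndU₁ hlhs₁ hpair₁
  set zs₃ := zs.filter fun z => U₂.any fun p => decide (z ∈ p.2.vars) with hzs₃
  have chain : ∀ (M : FOStruc L), IsFEA M → ∀ h : ℕ → M.carrier,
      ESat M h E ↔ USat M h zs₃ U₂ := by
    intro M hM h
    rw [hsem M h]
    have c1 : SysSat M h zs eqs ↔ USat M h zs U := by
      unfold SysSat USat
      exact exists_congr fun g => and_congr_right fun _ => hsemU M hM g
    rw [c1, dropBound M h zs U hndU hpair, ← hU₁, hsem₂ M h, dropUnused M h zs U₂ hlhs₂, ← hzs₃]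
  by_cases hU₂nil : U₂ = []
  · subst hU₂nil
    refine ⟨.tru, Or.inl rfl, fun M hM h => ⟨fun _ => trivial, fun _ => ?_⟩⟩
    exact (chain M hM h).2 ⟨h, fun y _ => rfl, fun p hp => absurd hp (List.not_mem_nil)⟩
  · refine ⟨exOf zs₃ (conjOf U₂), Or.inr (Or.inr ⟨zs₃, U₂, hU₂nil, rfl, ?_, ?_, ?_, ?_⟩), ?_⟩
    · refine List.Nodup.append hnd₂ (hnd.filter _) ?_
      intro a ha ha3
      obtain ⟨p, hp, h1⟩ := List.mem_map.1 ha
      exact hlhs₂ p hp (h1 ▸ List.mem_of_mem_filter ha3)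
    · exact hpair₂
    · intro z hz
      have := (List.mem_filter.1 hz).2
      simpa using this
    · intro z hz p hp
      exact hnv₂ p hp z (List.mem_of_mem_filter hz)
    · intro M hM h
      rw [chain M hM h, exOf_sat]
      exact (exists_congr fun g => and_congr_right fun _ => (conjOf_sat M U₂ g)).symm
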